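/- arXiv:1507.05802 — 2 statements merged into one kernel-verified Lean document; each statement's English description precedes it below -/
import Mathlib

section
/- If X is a smooth affine variety over a field k of characteristic zero that is rigid (admits no nontrivial action of the additive group G_a), and Y is any variety such that there is an isomorphism X × A¹ ≅ Y × A¹ of k-varieties, then X ≅ Y. -/
/-!
Conjugating `d/dX` by an isomorphism `A[X] ≃ B[X]` gives a locally nilpotent derivation `D` of
`A[X]`, and the heart of the proof is semi-rigidity: `D` kills `A`. Grade `A[X]` by `X`-degree.
Since `A` is finitely generated, the components of `D` of large degree vanish, and if all components of degree above `e` vanish, the component `T` of degree `e` is again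
locally nilpotent. Now `T X` is `X` times a homogeneous element, so `T X = 0`; hence
`T (b X^n) = δ(b) X^(n+e)` for a derivation `δ` of `A`, which is locally nilpotent, so `δ = 0` by
rigidity and `T = 0`. By descending induction all nonnegative components vanish, so `D A = 0`.
Then `D = D X · d/dX`, whose kernel is `A`, so the isomorphism maps `A` onto `B`.
-/

open Polynomial Finset

namespace Derivation

variable {R A : Type*} [CommRing R] [CommRing A] [Algebra R A]

def IsLocallyNilpotent (D : Derivation R A A) : Prop :=
  ∀ a, ∃ n : ℕ, (D.toLinearMap ^ n) a = 0

variable (R A) in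
def _root_.Algebra.IsRigid : Prop :=
  ∀ D : Derivation R A A, D.IsLocallyNilpotent → D = 0

theorem pow_apply_mul (D : Derivation R A A) (n : ℕ) (a b : A) :
    (D.toLinearMap ^ n) (a * b) = ∑ ij ∈ antidiagonal n,
      n.choose ij.1 • ((D.toLinearMap ^ ij.1) a * (D.toLinearMap ^ ij.2) b) := by
  induction n with
  | zero => simp
  | succ n ih =>
    rw [sum_antidiagonal_choose_succ_nsmul
      (fun i j ↦ (D.toLinearMap ^ i) a * (D.toLinearMap ^ j) b) n]
    simp only [pow_succ', Module.End.mul_apply, ih, map_sum, map_nsmul, coeFn_coe, leibniz,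
      smul_eq_mul, nsmul_add, sum_add_distrib]
    rw [← sum_add_distrib, ← sum_add_distrib]
    refine sum_congr rfl fun ⟨i, j⟩ hij ↦ ?_
    rw [Nat.choose_symm_of_eq_add (HasAntidiagonal.mem_antidiagonal.1 hij).symm,
      mul_comm (D _), add_comm]

theorem IsLocallyNilpotent.exists_pow_apply_ne_zero_and_pow_succ_apply_eq_zero
    {D : Derivation R A A} (hD : D.IsLocallyNilpotent) {a : A} (ha : a ≠ 0) :
    ∃ n, (D.toLinearMap ^ n) a ≠ 0 ∧ (D.toLinearMap ^ (n + 1)) a = 0 := by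
  obtain ⟨n, hn⟩ := hD a
  induction n with
  | zero => exact absurd hn ha
  | succ n ih => exact (em ((D.toLinearMap ^ n) a = 0)).elim ih fun h ↦ ⟨n, h, hn⟩

/-- The `D`-degree `ν` is additive on a domain of characteristic zero, while `ν (D r) < ν r`
unless `D r = 0`; so `D r = r * s` forces `D r = 0`. -/
theorem IsLocallyNilpotent.apply_eq_zero_of_apply_eq_mul [IsDomain A] [CharZero A]
    {D : Derivation R A A} (hD : D.IsLocallyNilpotent) {r s : A} (h : D r = r * s) :
    D r = 0 := by
  by_contra hDr
  have hr : r ≠ 0 := by rintro rfl; simp at hDr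
  have hs : s ≠ 0 := by rintro rfl; simp [h] at hDr
  obtain ⟨n, hn, hn'⟩ := hD.exists_pow_apply_ne_zero_and_pow_succ_apply_eq_zero hr
  obtain ⟨m, hm, hm'⟩ := hD.exists_pow_apply_ne_zero_and_pow_succ_apply_eq_zero hs
  have hrs : (D.toLinearMap ^ (n + m)) (r * s) =
      (n + m).choose n • ((D.toLinearMap ^ n) r * (D.toLinearMap ^ m) s) := by
    rw [pow_apply_mul, sum_eq_single_of_mem (n, m) (HasAntidiagonal.mem_antidiagonal.2 rfl)]
    rintro ⟨i, j⟩ hij hne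
    rw [HasAntidiagonal.mem_antidiagonal] at hij
    rcases lt_trichotomy i n with hi | rfl | hi
    · rw [Module.End.pow_map_zero_of_le (by omega) hm', mul_zero, smul_zero]
    · obtain rfl : j = m := by omega
      exact absurd rfl hne
    · rw [Module.End.pow_map_zero_of_le hi hn', zero_mul, smul_zero]
  have hrs_zero : (D.toLinearMap ^ (n + m)) (r * s) = 0 := by
    rw [← h, ← coeFn_coe, ← Module.End.mul_apply, ← pow_succ]
    exact Module.End.pow_map_zero_of_le (by omega) hn'
  rw [hrs_zero, nsmul_eq_mul, eq_comm] at hrs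
  exact mul_ne_zero (Nat.cast_ne_zero.2 (Nat.choose_pos (Nat.le_add_right n m)).ne')
    (mul_ne_zero hn hm) hrs

section Polynomial

theorem coeff_apply_monomial_mul_monomial (D : Derivation R A[X] A[X]) (m n e : ℕ) (a b : A) :
    (D (monomial m a * monomial n b)).coeff (m + n + e) =
      a * (D (monomial n b)).coeff (n + e) + b * (D (monomial m a)).coeff (m + e) := by
  rw [leibniz, smul_eq_mul, smul_eq_mul, coeff_add, show m + n + e = n + e + m by omega,
    coeff_monomial_mul, show n + e + m = m + e + n by omega, coeff_monomial_mul]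

/-- The homogeneous component of degree `e` of `D` for the `X`-degree grading of `A[X]`: it sends
`b X^n` to the `X^(n+e)`-term of `D (b X^n)`. -/
noncomputable def homogeneousComponent (D : Derivation R A[X] A[X]) (e : ℕ) :
    Derivation R A[X] A[X] :=
  Derivation.mk'
    (lsum fun n ↦ (monomial (n + e)).restrictScalars R ∘ₗ (lcoeff A (n + e)).restrictScalars R ∘ₗ
      D.toLinearMap ∘ₗ (monomial n).restrictScalars R)
    fun p q ↦ by
      induction p using Polynomial.induction_on' with
      | add p p' hp hp' =>
        rw [add_mul, map_add, hp, hp', map_add, add_smul, smul_add, add_add_add_comm]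
      | monomial m a =>
        induction q using Polynomial.induction_on' with
        | add q q' hq hq' =>
          rw [mul_add, map_add, hq, hq', map_add, add_smul, smul_add, add_add_add_comm]
        | monomial n b =>
          simp only [lsum_apply, LinearMap.coe_comp, LinearMap.coe_restrictScalars, coeFn_coe,
            Function.comp_apply, lcoeff_apply, map_zero, coeff_zero,
            sum_monomial_index, monomial_mul_monomial]
          rw [← monomial_mul_monomial, coeff_apply_monomial_mul_monomial, smul_eq_mul,
            smul_eq_mul, monomial_mul_monomial, monomial_mul_monomial, map_add, add_assoc m,
            add_left_comm m]

@[simp]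
theorem homogeneousComponent_monomial (D : Derivation R A[X] A[X]) (e n : ℕ) (b : A) :
    D.homogeneousComponent e (monomial n b) =
      monomial (n + e) ((D (monomial n b)).coeff (n + e)) := by
  simp [homogeneousComponent]

variable {D : Derivation R A[X] A[X]} {e : ℕ}

theorem homogeneousComponent_eq_zero_iff :
    D.homogeneousComponent e = 0 ↔ ∀ n b, (D (monomial n b)).coeff (n + e) = 0 := by
  refine ⟨fun h n b ↦ ?_, fun h ↦ ?_⟩
  · simpa [h] using (homogeneousComponent_monomial D e n b).symm
  · ext p
    induction p using Polynomial.induction_on' with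
    | add p q hp hq => simp [hp, hq]
    | monomial n b => simp [h]

theorem coeff_apply_monomial_eq_zero_of_lt
    (htop : ∀ i, e < i → D.homogeneousComponent i = 0) {n j : ℕ} (b : A) (hj : n + e < j) :
    (D (monomial n b)).coeff j = 0 := by
  have := homogeneousComponent_eq_zero_iff.1 (htop (j - n) (by omega)) n b
  rwa [Nat.add_sub_cancel' (by omega)] at this

theorem natDegree_apply_le (htop : ∀ i, e < i → D.homogeneousComponent i = 0)
    {p : A[X]} {N : ℕ} (hp : p.natDegree ≤ N) :
    (D p).natDegree ≤ N + e := by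
  rw [natDegree_le_iff_coeff_eq_zero]
  intro j hj
  rw [p.as_sum_range' (N + 1) (by omega), map_sum, finsetSum_coeff]
  exact sum_eq_zero fun i hi ↦
    coeff_apply_monomial_eq_zero_of_lt htop _ (by rw [mem_range] at hi; omega)

theorem natDegree_pow_apply_le (htop : ∀ i, e < i → D.homogeneousComponent i = 0)
    {p : A[X]} {N : ℕ} (hp : p.natDegree ≤ N) (K : ℕ) :
    ((D.toLinearMap ^ K) p).natDegree ≤ N + K * e := by
  induction K with
  | zero => simpa using hp
  | succ K ih =>
    rw [pow_succ', Module.End.mul_apply, add_mul, one_mul, ← add_assoc]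
    exact natDegree_apply_le htop ih

theorem coeff_apply_of_natDegree_le (htop : ∀ i, e < i → D.homogeneousComponent i = 0)
    {p : A[X]} {N : ℕ} (hp : p.natDegree ≤ N) :
    (D p).coeff (N + e) = (D (monomial N (p.coeff N))).coeff (N + e) := by
  conv_lhs => rw [p.as_sum_range' (N + 1) (by omega)]
  rw [map_sum, finsetSum_coeff, sum_range_succ, sum_eq_zero, zero_add]
  exact fun i hi ↦ coeff_apply_monomial_eq_zero_of_lt htop _ (by rw [mem_range] at hi; omega)

theorem pow_homogeneousComponent_apply_monomial
    (htop : ∀ i, e < i → D.homogeneousComponent i = 0) (K n : ℕ) (b : A) :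
    ((D.homogeneousComponent e).toLinearMap ^ K) (monomial n b) =
      monomial (n + K * e) (((D.toLinearMap ^ K) (monomial n b)).coeff (n + K * e)) := by
  induction K with
  | zero => simp
  | succ K ih =>
    have hdeg := natDegree_pow_apply_le htop (natDegree_monomial_le (m := n) b) K
    rw [pow_succ', Module.End.mul_apply, ih, coeFn_coe, homogeneousComponent_monomial,
      ← coeff_apply_of_natDegree_le htop hdeg, pow_succ', Module.End.mul_apply, coeFn_coe,
      add_mul, one_mul, add_assoc]

theorem IsLocallyNilpotent.homogeneousComponent (hD : D.IsLocallyNilpotent)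
    (htop : ∀ i, e < i → D.homogeneousComponent i = 0) :
    (D.homogeneousComponent e).IsLocallyNilpotent := by
  intro p
  induction p using Polynomial.induction_on' with
  | add p q hp hq =>
    obtain ⟨K, hK⟩ := hp
    obtain ⟨L, hL⟩ := hq
    refine ⟨K + L, ?_⟩
    rw [map_add, Module.End.pow_map_zero_of_le (by omega) hK,
      Module.End.pow_map_zero_of_le (by omega) hL, add_zero]
  | monomial n b =>
    obtain ⟨K, hK⟩ := hD (monomial n b)
    exact ⟨K, by rw [pow_homogeneousComponent_apply_monomial htop, hK, coeff_zero, map_zero]⟩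

theorem IsLocallyNilpotent.homogeneousComponent_apply_X_eq_zero [IsDomain A] [CharZero A]
    (hT : (D.homogeneousComponent e).IsLocallyNilpotent) : D.homogeneousComponent e X = 0 :=
  hT.apply_eq_zero_of_apply_eq_mul (s := monomial e ((D (monomial 1 1)).coeff (1 + e))) <| by
    rw [← monomial_one_one_eq_X, homogeneousComponent_monomial, monomial_mul_monomial, one_mul]

variable (D e) in
noncomputable def restrictCoeff : Derivation R A A :=
  (lcoeff A e).compDer (D.compAlgebraMap A)

@[simp]
theorem restrictCoeff_apply (a : A) : D.restrictCoeff e a = (D (C a)).coeff e :=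
  rfl

theorem homogeneousComponent_monomial_of_apply_X_eq_zero (hX : D.homogeneousComponent e X = 0)
    (n : ℕ) (b : A) :
    D.homogeneousComponent e (monomial n b) = monomial (n + e) (D.restrictCoeff e b) := by
  rw [← C_mul_X_pow_eq_monomial, leibniz, leibniz_pow, hX, smul_zero, smul_zero, smul_zero,
    zero_add, ← monomial_zero_left, homogeneousComponent_monomial, X_pow_eq_monomial, smul_eq_mul,
    monomial_mul_monomial, one_mul, zero_add, monomial_zero_left, restrictCoeff_apply]

theorem pow_homogeneousComponent_apply_C (hX : D.homogeneousComponent e X = 0) (K : ℕ) (b : A) :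
    ((D.homogeneousComponent e).toLinearMap ^ K) (C b) =
      monomial (K * e) (((D.restrictCoeff e).toLinearMap ^ K) b) := by
  induction K with
  | zero => simp
  | succ K ih =>
    rw [pow_succ', Module.End.mul_apply, ih, coeFn_coe,
      homogeneousComponent_monomial_of_apply_X_eq_zero hX, pow_succ', Module.End.mul_apply,
      coeFn_coe, add_one_mul]

theorem homogeneousComponent_eq_zero_of_isRigid [IsDomain A] [CharZero A]
    (hA : Algebra.IsRigid R A) (hD : D.IsLocallyNilpotent)
    (htop : ∀ i, e < i → D.homogeneousComponent i = 0) : D.homogeneousComponent e = 0 := by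
  have hT := hD.homogeneousComponent htop
  have hX := hT.homogeneousComponent_apply_X_eq_zero
  have hδ : D.restrictCoeff e = 0 := hA _ fun b ↦ by
    obtain ⟨K, hK⟩ := hT (C b)
    exact ⟨K, by rwa [pow_homogeneousComponent_apply_C hX, monomial_eq_zero_iff] at hK⟩
  refine homogeneousComponent_eq_zero_iff.2 fun n b ↦ ?_
  simpa [hδ] using homogeneousComponent_monomial_of_apply_X_eq_zero hX n b

variable (D) in
theorem exists_natDegree_apply_C_le [Algebra.FiniteType R A] :
    ∃ M, ∀ a, (D (C a)).natDegree ≤ M := by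
  obtain ⟨s, hs⟩ := Algebra.FiniteType.out (R := R) (A := A)
  refine ⟨s.sup fun a ↦ (D (C a)).natDegree, fun a ↦ ?_⟩
  induction (hs ▸ Algebra.mem_top : a ∈ Algebra.adjoin R (s : Set A)) using
    Algebra.adjoin_induction with
  | mem x hx => exact le_sup (f := fun a ↦ (D (C a)).natDegree) hx
  | algebraMap r => simp [← Polynomial.algebraMap_apply]
  | add x y _ _ hx hy =>
    rw [map_add, map_add]
    exact (natDegree_add_le _ _).trans (max_le hx hy)
  | mul x y _ _ hx hy =>
    rw [map_mul, leibniz, smul_eq_mul, smul_eq_mul]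
    exact (natDegree_add_le _ _).trans
      (max_le ((natDegree_C_mul_le _ _).trans hy) ((natDegree_C_mul_le _ _).trans hx))

variable (D) in
theorem exists_homogeneousComponent_eq_zero [Algebra.FiniteType R A] :
    ∃ E, ∀ i, E < i → D.homogeneousComponent i = 0 := by
  obtain ⟨M, hM⟩ := exists_natDegree_apply_C_le D
  refine ⟨max M (D X).natDegree, fun i hi ↦ homogeneousComponent_eq_zero_iff.2 fun n b ↦
    coeff_eq_zero_of_natDegree_lt ?_⟩
  have hXn : (D (X ^ n)).natDegree ≤ n + (D X).natDegree := by
    rw [leibniz_pow, smul_eq_mul]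
    refine (natDegree_smul_le _ _).trans (natDegree_mul_le.trans ?_)
    have := natDegree_X_pow_le (R := A) (n - 1)
    omega
  rw [← C_mul_X_pow_eq_monomial, leibniz, smul_eq_mul, smul_eq_mul]
  refine (natDegree_add_le _ _).trans_lt (max_lt ?_ ?_)
  · have := natDegree_C_mul_le b (D (X ^ n))
    omega
  · have := natDegree_mul_le (p := (X ^ n : A[X])) (q := D (C b))
    have := hM b
    have := natDegree_X_pow_le (R := A) n
    omega

theorem IsLocallyNilpotent.apply_C_eq_zero_of_isRigid [IsDomain A] [CharZero A]
    [Algebra.FiniteType R A] (hA : Algebra.IsRigid R A) (hD : D.IsLocallyNilpotent) (a : A) :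
    D (C a) = 0 := by
  obtain ⟨E, hE⟩ := exists_homogeneousComponent_eq_zero D
  have hzero : ∀ d i, E < i + d → D.homogeneousComponent i = 0 := by
    intro d
    induction d with
    | zero => exact hE
    | succ d ih =>
      intro i hi
      by_cases h : E < i + d
      · exact ih i h
      · exact homogeneousComponent_eq_zero_of_isRigid hA hD fun j hj ↦ ih j (by omega)
  ext j
  simpa using homogeneousComponent_eq_zero_iff.1 (hzero (E + 1) j (by omega)) 0 a

theorem apply_eq_derivative_mul (hC : ∀ a, D (C a) = 0) (p : A[X]) :
    D p = derivative p * D X := by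
  induction p using Polynomial.induction_on' with
  | add p q hp hq => rw [map_add, hp, hq, derivative_add, add_mul]
  | monomial n b =>
    rw [← C_mul_X_pow_eq_monomial, leibniz, leibniz_pow, hC, smul_zero, add_zero,
      derivative_C_mul_X_pow, smul_eq_mul, smul_eq_mul, nsmul_eq_mul, C_mul, C_eq_natCast]
    ring

theorem isLocallyNilpotent_restrictScalars_derivative' :
    ((derivative' : Derivation A A[X] A[X]).restrictScalars R).IsLocallyNilpotent := fun p ↦
  ⟨p.natDegree + 1, by
    rw [Module.End.pow_apply]
    exact iterate_derivative_eq_zero (Nat.lt_succ_self _)⟩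

end Polynomial

section Conj

variable {R A B : Type*} [CommRing R] [CommRing A] [CommRing B] [Algebra R A] [Algebra R B]

noncomputable def conj (D : Derivation R B B) (φ : A ≃ₐ[R] B) : Derivation R A A :=
  Derivation.mk' (φ.symm.toLinearMap ∘ₗ D.toLinearMap ∘ₗ φ.toLinearMap) fun a b ↦ by
    simp [leibniz]

variable {D : Derivation R B B} {φ : A ≃ₐ[R] B}

theorem conj_apply (a : A) : D.conj φ a = φ.symm (D (φ a)) :=
  rfl

theorem pow_conj_apply (n : ℕ) (a : A) :
    ((D.conj φ).toLinearMap ^ n) a = φ.symm ((D.toLinearMap ^ n) (φ a)) := by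
  induction n generalizing a with
  | zero => simp
  | succ n ih =>
    rw [pow_succ, Module.End.mul_apply, ih, coeFn_coe, conj_apply, φ.apply_symm_apply,
      pow_succ, Module.End.mul_apply, coeFn_coe]

theorem IsLocallyNilpotent.conj (hD : D.IsLocallyNilpotent) (φ : A ≃ₐ[R] B) :
    (D.conj φ).IsLocallyNilpotent := fun a ↦
  (hD (φ a)).imp fun n hn ↦ by rw [pow_conj_apply, hn, map_zero]

end Conj

end Derivation

theorem Polynomial.nonempty_algEquiv_of_forall_mem_range_C {R A B : Type*} [CommRing R]
    [CommRing A] [CommRing B] [Algebra R A] [Algebra R B] (φ : A[X] ≃ₐ[R] B[X])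
    (h₁ : ∀ a, φ (C a) ∈ Set.range C) (h₂ : ∀ b, φ.symm (C b) ∈ Set.range C) :
    Nonempty (A ≃ₐ[R] B) := by
  let ιA := IsScalarTower.toAlgHom R A A[X]
  let ιB := IsScalarTower.toAlgHom R B B[X]
  have hrange : ιA.range.map (φ : A[X] →ₐ[R] B[X]) = ιB.range := by
    refine le_antisymm ?_ fun _ ⟨b, hb⟩ ↦ ?_
    · rintro _ ⟨_, ⟨a, rfl⟩, rfl⟩
      exact h₁ a
    · obtain ⟨a, ha⟩ := h₂ b
      exact ⟨C a, ⟨a, rfl⟩, by simp [ha, ← hb, ιB]⟩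
  exact ⟨(AlgEquiv.ofInjective ιA C_injective).trans <| (φ.subalgebraMap _).trans <|
    (Subalgebra.equivOfEq _ _ hrange).trans (AlgEquiv.ofInjective ιB C_injective).symm⟩

open Derivation

theorem rigid_cancellation_general
    (k : Type) [Field k] [CharZero k]
    (A B : Type) [CommRing A] [CommRing B] [Algebra k A] [Algebra k B]
    [Algebra.FiniteType k A]    -- X = Spec A smooth affine variety
    [IsDomain A] [IsDomain B]  -- Y = Spec B a variety
    (rigid : ∀ D : Derivation k A A,
      (∀ a : A, ∃ n : ℕ, (D.toLinearMap ^ n) a = 0) → D = 0)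
    (h : Nonempty (Polynomial A ≃ₐ[k] Polynomial B)) :
    Nonempty (A ≃ₐ[k] B) := by
  obtain ⟨φ⟩ := h
  have : CharZero A := charZero_of_injective_algebraMap (algebraMap k A).injective
  have : CharZero B := charZero_of_injective_algebraMap (algebraMap k B).injective
  set D := (derivative'.restrictScalars k).conj φ
  have hDC : ∀ a, D (C a) = 0 :=
    (isLocallyNilpotent_restrictScalars_derivative'.conj φ).apply_C_eq_zero_of_isRigid rigid
  -- `D (φ.symm X) = 1`
  have hDX : D X ≠ 0 := fun hX ↦ by
    simpa [D, conj_apply, hX] using apply_eq_derivative_mul hDC (φ.symm X)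
  refine nonempty_algEquiv_of_forall_mem_range_C φ
    (fun a ↦ ⟨_, (eq_C_of_derivative_eq_zero ?_).symm⟩)
    fun b ↦ ⟨_, (eq_C_of_derivative_eq_zero ?_).symm⟩
  · simpa [D, conj_apply] using congrArg φ (hDC a)
  · have hD : D (φ.symm (C b)) = 0 := by simp [D, conj_apply]
    rw [apply_eq_derivative_mul hDC] at hD
    exact (mul_eq_zero.1 hD).resolve_right hDX

theorem rigid_cancellation
    (k : Type) [Field k] [CharZero k]
    (A B : Type) [CommRing A] [CommRing B] [Algebra k A] [Algebra k B]
    [Algebra.Smooth k A] [Algebra.FiniteType k A]    -- X = Spec A smooth affine variety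
    [IsDomain A] [IsDomain B] [Algebra.FiniteType k B]  -- Y = Spec B a variety
    (rigid : ∀ D : Derivation k A A,
      (∀ a : A, ∃ n : ℕ, (D.toLinearMap ^ n) a = 0) → D = 0)
    (h : Nonempty (Polynomial A ≃ₐ[k] Polynomial B)) :
    Nonempty (A ≃ₐ[k] B) :=
  rigid_cancellation_general k A B rigid h
end

section
/- The affine surface X = {(-1 + α·2^{1/3}x₂ + α·2^{1/3}x₃)³ + 8(x₁³ + x₂³ + x₃³) = 0} ⊂ A³ over ℂ, with α = exp(iπ/3), is smooth: the gradient of the defining polynomial does not vanish at any point of X. -/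
/-!
Nothing about `α = exp(iπ/3)` or `2^{1/3}` matters: for every coefficient `a`, write
`f = L³ + 8(x³ + y³ + z³)` with `L = -1 + a y + a z`. The Euler-type identity
`x ∂ₓf + y ∂_yf + z ∂_zf = 3f + 3L²` shows that a singular point of `{f = 0}` has `L = 0`;
then the last two gradient equations force `y = z = 0`, whence `L = -1`.
-/

open Complex

section

variable {K : Type*} [Field K]

theorem cubic_euler_identity (a x y z : K) :
    x * (24 * x ^ 2) + y * (3 * a * (-1 + a * y + a * z) ^ 2 + 24 * y ^ 2)
        + z * (3 * a * (-1 + a * y + a * z) ^ 2 + 24 * z ^ 2)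
      = 3 * ((-1 + a * y + a * z) ^ 3 + 8 * (x ^ 3 + y ^ 3 + z ^ 3))
        + 3 * (-1 + a * y + a * z) ^ 2 := by
  ring

theorem cubic_surface_smooth (h2 : (2 : K) ≠ 0) (h3 : (3 : K) ≠ 0) (a x y z : K)
    (hf : (-1 + a * y + a * z) ^ 3 + 8 * (x ^ 3 + y ^ 3 + z ^ 3) = 0) :
    ¬(24 * x ^ 2 = 0 ∧
      3 * a * (-1 + a * y + a * z) ^ 2 + 24 * y ^ 2 = 0 ∧
      3 * a * (-1 + a * y + a * z) ^ 2 + 24 * z ^ 2 = 0) := by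
  rintro ⟨hx, hy, hz⟩
  have h24 : (24 : K) ≠ 0 := by
    have : (24 : K) = 2 ^ 3 * 3 := by norm_num
    rw [this]
    exact mul_ne_zero (pow_ne_zero 3 h2) h3
  have hL : -1 + a * y + a * z = 0 := by
    have h := cubic_euler_identity a x y z
    rw [hx, hy, hz, hf] at h
    exact pow_eq_zero_iff two_ne_zero |>.mp
      ((mul_eq_zero.mp (by linear_combination -h)).resolve_left h3)
  have hzero {t : K} (ht : 24 * t ^ 2 = 0) : t = 0 :=
    pow_eq_zero_iff two_ne_zero |>.mp ((mul_eq_zero.mp ht).resolve_left h24)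
  have hy0 : y = 0 := hzero (by rw [hL] at hy; simpa using hy)
  have hz0 : z = 0 := hzero (by rw [hL] at hz; simpa using hz)
  rw [hy0, hz0] at hL
  norm_num at hL

end

theorem affine_cubic_smooth :
    ∀ x₁ x₂ x₃ : ℂ,
      (letI α : ℂ := Complex.exp (Real.pi * I / 3)
       letI c : ℂ := ((2 : ℝ) ^ ((1 : ℝ) / 3) : ℝ)
       (-1 + α * c * x₂ + α * c * x₃) ^ 3 + 8 * (x₁ ^ 3 + x₂ ^ 3 + x₃ ^ 3) = 0 →
        ¬(24 * x₁ ^ 2 = 0 ∧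
          3 * (α * c) * (-1 + α * c * x₂ + α * c * x₃) ^ 2 + 24 * x₂ ^ 2 = 0 ∧
          3 * (α * c) * (-1 + α * c * x₂ + α * c * x₃) ^ 2 + 24 * x₃ ^ 2 = 0)) :=
  fun x₁ x₂ x₃ =>
    cubic_surface_smooth two_ne_zero three_ne_zero
      (Complex.exp (Real.pi * I / 3) * ((2 : ℝ) ^ ((1 : ℝ) / 3) : ℝ)) x₁ x₂ x₃
end
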